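/- arXiv:0906.4987 — 3 statements merged into one kernel-verified Lean document; each statement's English description precedes it below -/
import Mathlib

section
/- Let X be a nonzero cochain complex of finite-dimensional left A-modules such that every component X^i is either zero or an indecomposable module, and such that for every l ∈ ℤ the differential d^l: X^l → X^{l+1} is zero if and only if X^j = 0 for all j > l, or X^j = 0 for all j ≤ l. Then X is indecomposable in the category of cochain complexes: whenever X is isomorphic to a direct sum of complexes Y ⊕ Z, then Y is isomorphic to the zero complex or Z is isomorphic to the zero complex. -/
/-!
Componentwise, `X ≅ Y ⊞ Z` gives `Xⁱ ≅ Yⁱ ⊞ Zⁱ`, so indecomposability of the components forces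
`Yⁱ = 0` or `Zⁱ = 0` in every degree. If `Yᵃ ≠ 0` and `Zᵇ ≠ 0` with `a ≤ b`, then `Xᵃ` and `Xᵇ`
are nonzero, so the hypothesis on the differentials makes `dˡ` nonzero for `a ≤ l < b`. Walking up
from `Zᵃ = 0`: if `Zˡ = 0` but `Yˡ⁺¹ = 0`, then both summands of `dˡ` vanish, so `dˡ = 0`;
hence `Zˡ⁺¹ = 0`, and eventually `Zᵇ = 0`, a contradiction.
-/

open CategoryTheory CategoryTheory.Limits

/-- A module is indecomposable if it is nonzero and is not the (internal) direct sum of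
two nonzero submodules. -/
def IsIndecomposableModule (A : Type*) [Ring A] (M : Type*) [AddCommGroup M] [Module A M] :
    Prop :=
  Nontrivial M ∧ ∀ (N₁ N₂ : Submodule A M), IsCompl N₁ N₂ → N₁ = ⊥ ∨ N₂ = ⊥

section Module

variable {A : Type*} [Ring A]

theorem IsIndecomposableModule.subsingleton_or_subsingleton_of_linearEquiv_prod
    {M N₁ N₂ : Type*} [AddCommGroup M] [Module A M] [AddCommGroup N₁] [Module A N₁]
    [AddCommGroup N₂] [Module A N₂] (hM : IsIndecomposableModule A M) (e : M ≃ₗ[A] N₁ × N₂) :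
    Subsingleton N₁ ∨ Subsingleton N₂ := by
  have hc := (Submodule.orderIsoMapComap e.symm).isCompl
    (LinearMap.isCompl_range_inl_inr (R := A) (M := N₁) (M₂ := N₂))
  refine (hM.2 _ _ hc).imp (fun h => ?_) (fun h => ?_)
  · rw [map_eq_bot_iff, LinearMap.range_eq_bot] at h
    exact ⟨fun x y => LinearMap.inl_injective
      ((LinearMap.congr_fun h x).trans (LinearMap.congr_fun h y).symm)⟩
  · rw [map_eq_bot_iff, LinearMap.range_eq_bot] at h
    exact ⟨fun x y => LinearMap.inr_injective
      ((LinearMap.congr_fun h x).trans (LinearMap.congr_fun h y).symm)⟩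

theorem IsIndecomposableModule.isZero_or_isZero_of_iso_biprod {M N₁ N₂ : ModuleCat A}
    (hM : IsIndecomposableModule A M) (e : M ≅ N₁ ⊞ N₂) : IsZero N₁ ∨ IsZero N₂ :=
  (hM.subsingleton_or_subsingleton_of_linearEquiv_prod
    (e ≪≫ ModuleCat.biprodIsoProd N₁ N₂).toLinearEquiv).imp
    ModuleCat.isZero_iff_subsingleton.mpr ModuleCat.isZero_iff_subsingleton.mpr

end Module

namespace HomologicalComplex

variable {C ι : Type*} [Category C] {c : ComplexShape ι}

theorem isZero_of_forall_isZero_X [HasZeroMorphisms C] (X : HomologicalComplex C c)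
    (h : ∀ i, IsZero (X.X i)) : IsZero X := by
  rw [IsZero.iff_id_eq_zero]
  ext i
  exact (h i).eq_of_src _ _

variable [Preadditive C] [HasBinaryBiproducts C] {X Y Z : HomologicalComplex C c}

noncomputable def isoBiprodX (e : X ≅ Y ⊞ Z) (i : ι) : X.X i ≅ Y.X i ⊞ Z.X i :=
  (eval C c i).mapIso e ≪≫ biprodXIso Y Z i

theorem d_eq_zero_of_iso_biprod (e : X ≅ Y ⊞ Z) {i j : ι} (hY : Y.d i j = 0)
    (hZ : Z.d i j = 0) : X.d i j = 0 := by
  have hW : (Y ⊞ Z).d i j = 0 := by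
    ext <;> simp [Hom.comm, hY, hZ]
  rw [← Category.id_comp (X.d i j), ← id_f, ← e.hom_inv_id, comp_f, Category.assoc, Hom.comm, hW,
    zero_comp, comp_zero]

end HomologicalComplex

namespace CochainComplex

variable {C : Type*} [Category C] [Preadditive C] [HasBinaryBiproducts C]
  {X Y Z : CochainComplex C ℤ}

theorem isZero_X_of_le_of_iso_biprod (e : X ≅ Y ⊞ Z)
    (hYZ : ∀ i, IsZero (Y.X i) ∨ IsZero (Z.X i))
    (hd : ∀ l, X.d l (l + 1) = 0 →
      (∀ j, l < j → IsZero (X.X j)) ∨ (∀ j, j ≤ l → IsZero (X.X j)))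
    {a b : ℤ} (hab : a ≤ b) (hYa : ¬ IsZero (Y.X a)) : IsZero (Z.X b) := by
  by_contra hZb
  have hX : ∀ i, IsZero (X.X i) → IsZero (Y.X i) ∧ IsZero (Z.X i) := fun i h =>
    (biprod_isZero_iff _ _).mp (h.of_iso (HomologicalComplex.isoBiprodX e i).symm)
  have hd_ne : ∀ l, a ≤ l → l < b → X.d l (l + 1) ≠ 0 := fun l hal hlb h =>
    (hd l h).elim (fun h => hZb (hX b (h b hlb)).2) (fun h => hYa (hX a (h a hal)).1)
  have hZ : ∀ l, a ≤ l → l ≤ b → IsZero (Z.X l) := by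
    intro l hal
    induction l, hal using Int.leInduction with
    | base => exact fun _ => (hYZ a).resolve_left hYa
    | succ l hal ih =>
      intro hlb
      refine (hYZ (l + 1)).resolve_left fun hY => hd_ne l hal hlb ?_
      exact HomologicalComplex.d_eq_zero_of_iso_biprod e (hY.eq_of_tgt _ _)
        ((ih (by omega)).eq_of_src _ _)
  exact hZb (hZ b hab le_rfl)

theorem isZero_or_isZero_of_iso_biprod (e : X ≅ Y ⊞ Z)
    (hYZ : ∀ i, IsZero (Y.X i) ∨ IsZero (Z.X i))
    (hd : ∀ l, X.d l (l + 1) = 0 →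
      (∀ j, l < j → IsZero (X.X j)) ∨ (∀ j, j ≤ l → IsZero (X.X j))) :
    IsZero Y ∨ IsZero Z := by
  by_contra! ⟨hY, hZ⟩
  obtain ⟨a, hYa⟩ : ∃ a, ¬ IsZero (Y.X a) := by
    by_contra!
    exact hY (HomologicalComplex.isZero_of_forall_isZero_X Y this)
  obtain ⟨b, hZb⟩ : ∃ b, ¬ IsZero (Z.X b) := by
    by_contra!
    exact hZ (HomologicalComplex.isZero_of_forall_isZero_X Z this)
  have : HasBinaryBiproducts (CochainComplex C ℤ) := ⟨fun _ _ => inferInstance⟩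
  rcases le_total a b with hab | hba
  · exact hZb (isZero_X_of_le_of_iso_biprod e hYZ hd hab hYa)
  · exact hYa (isZero_X_of_le_of_iso_biprod (e ≪≫ biprod.braiding Y Z)
      (fun i => (hYZ i).symm) hd hba hZb)

end CochainComplex

theorem stmt2_general {A : Type} [Ring A]
    (X : CochainComplex (ModuleCat A) ℤ)
    (hcomp : ∀ i : ℤ, IsZero (X.X i) ∨ IsIndecomposableModule A (X.X i))
    (hd : ∀ l : ℤ, X.d l (l + 1) = 0 ↔
      ((∀ j : ℤ, l < j → IsZero (X.X j)) ∨ (∀ j : ℤ, j ≤ l → IsZero (X.X j)))) :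
    ∀ (Y Z : CochainComplex (ModuleCat A) ℤ), Nonempty (X ≅ Y ⊞ Z) →
      IsZero Y ∨ IsZero Z := by
  rintro Y Z ⟨e⟩
  refine CochainComplex.isZero_or_isZero_of_iso_biprod e (fun i => ?_) (fun l => (hd l).mp)
  have ei := HomologicalComplex.isoBiprodX e i
  rcases hcomp i with hXi | hXi
  · exact Or.inl ((biprod_isZero_iff _ _).mp (hXi.of_iso ei.symm)).1
  · exact hXi.isZero_or_isZero_of_iso_biprod ei

/-- Let `X` be a nonzero cochain complex of finite-dimensional left `A`-modules whose
components are all zero or indecomposable, and whose differential `d^l` vanishes exactly when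
the complex vanishes in all degrees `> l` or in all degrees `≤ l`. Then `X` is indecomposable
in the category of cochain complexes. -/
theorem stmt2 {k A : Type} [Field k] [Ring A] [Algebra k A] [FiniteDimensional k A]
    (X : CochainComplex (ModuleCat A) ℤ)
    (hfd : ∀ i : ℤ, Module.Finite A (X.X i))
    (hX : ¬ IsZero X)
    (hcomp : ∀ i : ℤ, IsZero (X.X i) ∨ IsIndecomposableModule A (X.X i))
    (hd : ∀ l : ℤ, X.d l (l + 1) = 0 ↔
      ((∀ j : ℤ, l < j → IsZero (X.X j)) ∨ (∀ j : ℤ, j ≤ l → IsZero (X.X j)))) :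
    ∀ (Y Z : CochainComplex (ModuleCat A) ℤ), Nonempty (X ≅ Y ⊞ Z) →
      IsZero Y ∨ IsZero Z :=
  stmt2_general X hcomp hd
end

section
/- Let X be an object of Comp^{-,b}(P) that is not contractible, such that every component X^i is either zero or an indecomposable module, and such that for every l ∈ ℤ the differential d^l: X^l → X^{l+1} is zero if and only if X^j = 0 for all j > l, or X^j = 0 for all j ≤ l. Then X is indecomposable as an object of the homotopy category: whenever X is homotopy equivalent to a direct sum Y ⊕ Z of objects of Comp^{-,b}(P), then Y is contractible or Z is contractible. -/
open CategoryTheory CategoryTheory.Limits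

/-- `X` is an object of `Comp^{-,b}(𝒫)`: a cochain complex of finitely generated
(equivalently, finite-dimensional, as `A` is a finite-dimensional algebra) projective
`A`-modules which is bounded above and has bounded homology. -/
def IsCompMinusB {A : Type} [Ring A] (X : CochainComplex (ModuleCat A) ℤ) : Prop :=
  (∀ i : ℤ, Module.Finite A (X.X i)) ∧
  (∀ i : ℤ, Projective (X.X i)) ∧
  (∃ N : ℤ, ∀ i : ℤ, N ≤ i → IsZero (X.X i)) ∧
  (∃ a b : ℤ, ∀ i : ℤ, (i < a ∨ b < i) → IsZero (X.homology i))

/-- A complex is contractible if its identity is null-homotopic. -/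
def IsContractibleComplex {A : Type} [Ring A] (X : CochainComplex (ModuleCat A) ℤ) : Prop :=
  Nonempty (Homotopy (𝟙 X) 0)

/-!
By Fitting's lemma every endomorphism of a component `X^i` is nilpotent or invertible. A chain
endomorphism `u` satisfies `d ∘ u^i = u^(i+1) ∘ d`, which is impossible with `d ≠ 0` when one of
`u^i`, `u^(i+1)` is invertible and the other nilpotent. The hypothesis on the differentials makes
them nonzero between any two nonzero components, so either every `u^i` is invertible or every
`u^i` is nilpotent; thus `u` or `1 - u` is an isomorphism of complexes. As the quotient functor
to the homotopy category is full, the same holds for endomorphisms of `X` there. In a splitting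
`X ≅ Y ⊞ Z` this applies to the idempotent projecting onto `Y`, and an idempotent that is
invertible, or whose complement is, kills one of the two summands.
-/

theorem IsIndecomposableModule.isNilpotent_or_bijective {A M : Type*} [Ring A] [AddCommGroup M]
    [Module A M] [IsArtinian A M] [IsNoetherian A M] (hM : IsIndecomposableModule A M)
    (φ : Module.End A M) : IsNilpotent φ ∨ Function.Bijective φ := by
  obtain ⟨n, hn⟩ := Filter.eventually_atTop.mp φ.eventually_isCompl_ker_pow_range_pow
  rcases hM.2 _ _ (hn (n + 1) n.le_succ) with hker | hrange
  · right
    have hinj : Function.Injective ((φ ^ n) ∘ₗ φ) := by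
      rw [← Module.End.mul_eq_comp, ← pow_succ]
      exact LinearMap.ker_eq_bot.mp hker
    exact IsArtinian.bijective_of_injective_endomorphism φ (Function.Injective.of_comp hinj)
  · exact Or.inl ⟨n + 1, LinearMap.range_eq_bot.mp hrange⟩

namespace Module.End

variable {R M N : Type*} [Semiring R] [AddCommMonoid M] [Module R M] [AddCommMonoid N]
  [Module R N] {d : M →ₗ[R] N} {a : Module.End R M} {b : Module.End R N}

theorem eq_zero_of_comp_eq_of_surjective_of_isNilpotent (h : b ∘ₗ d = d ∘ₗ a)
    (ha : Function.Surjective a) (hb : IsNilpotent b) : d = 0 := by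
  obtain ⟨n, hn⟩ := hb
  have hdn := commute_pow_left_of_commute h n
  rw [hn, LinearMap.zero_comp] at hdn
  ext x
  obtain ⟨y, rfl⟩ := (coe_pow a n ▸ ha.iterate n) x
  exact (LinearMap.congr_fun hdn y).symm

theorem eq_zero_of_comp_eq_of_isNilpotent_of_injective (h : b ∘ₗ d = d ∘ₗ a)
    (ha : IsNilpotent a) (hb : Function.Injective b) : d = 0 := by
  obtain ⟨n, hn⟩ := ha
  have hdn := commute_pow_left_of_commute h n
  rw [hn, LinearMap.comp_zero] at hdn
  ext x
  exact (coe_pow b n ▸ hb.iterate n) (by simpa using LinearMap.congr_fun hdn x)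

end Module.End

namespace CategoryTheory.Limits

variable {C : Type*} [Category C] [Preadditive C]

theorem isZero_of_retract_of_isIso_id_sub {X Y : C} (i : Y ⟶ X) (r : X ⟶ Y) (hir : i ≫ r = 𝟙 Y)
    [IsIso (𝟙 X - r ≫ i)] : IsZero Y := by
  have hi : i = 0 := by
    rw [← cancel_mono (𝟙 X - r ≫ i), Preadditive.comp_sub, reassoc_of% hir]
    simp
  rw [IsZero.iff_id_eq_zero, ← hir, hi, zero_comp]

theorem isZero_or_isZero_of_iso_biprod {X Y Z : C} [HasBinaryBiproduct Y Z]
    (hX : ∀ u : X ⟶ X, IsIso u ∨ IsIso (𝟙 X - u)) (e : X ≅ Y ⊞ Z) : IsZero Y ∨ IsZero Z := by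
  have htotal : 𝟙 X - (e.hom ≫ biprod.fst) ≫ biprod.inl ≫ e.inv =
      (e.hom ≫ biprod.snd) ≫ biprod.inr ≫ e.inv := by
    rw [sub_eq_iff_eq_add']
    calc 𝟙 X = e.hom ≫ (biprod.fst ≫ biprod.inl + biprod.snd ≫ biprod.inr) ≫ e.inv := by simp
      _ = _ := by simp only [Preadditive.add_comp, Preadditive.comp_add, Category.assoc]
  rcases hX ((e.hom ≫ biprod.fst) ≫ biprod.inl ≫ e.inv) with h | h
  · right
    rw [← sub_sub_cancel (𝟙 X) (_ ≫ _), htotal] at h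
    exact isZero_of_retract_of_isIso_id_sub (biprod.inr ≫ e.inv) (e.hom ≫ biprod.snd) (by simp)
  · left
    exact isZero_of_retract_of_isIso_id_sub (biprod.inl ≫ e.inv) (e.hom ≫ biprod.fst) (by simp)

end CategoryTheory.Limits

theorem HomotopyCategory.isIso_or_isIso_id_sub {V : Type*} [Category V] [Preadditive V]
    {ι : Type*} {c : ComplexShape ι} {X : HomologicalComplex V c}
    (hX : ∀ u : X ⟶ X, IsIso u ∨ IsIso (𝟙 X - u))
    (u : (quotient V c).obj X ⟶ (quotient V c).obj X) : IsIso u ∨ IsIso (𝟙 _ - u) := by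
  obtain ⟨v, rfl⟩ := (quotient V c).map_surjective u
  rw [← (quotient V c).map_id, ← (quotient V c).map_sub]
  rcases hX v with h | h
  · exact Or.inl inferInstance
  · exact Or.inr inferInstance

namespace CochainComplex

variable {A : Type*} [Ring A] {X : CochainComplex (ModuleCat A) ℤ}

theorem isIso_of_bijective_f {Y : CochainComplex (ModuleCat A) ℤ} (u : X ⟶ Y)
    (hu : ∀ i, Function.Bijective (u.f i).hom) : IsIso u := by
  have := fun i => (ConcreteCategory.isIso_iff_bijective (u.f i)).mpr (hu i)
  exact HomologicalComplex.Hom.isIso_of_components u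

theorem bijective_f_iff_of_d_ne_zero
    (hfit : ∀ i (φ : Module.End A (X.X i)), IsNilpotent φ ∨ Function.Bijective φ) (u : X ⟶ X)
    {i : ℤ} (hd : X.d i (i + 1) ≠ 0) :
    Function.Bijective (u.f i).hom ↔ Function.Bijective (u.f (i + 1)).hom := by
  have hcomm : (u.f (i + 1)).hom ∘ₗ (X.d i (i + 1)).hom = (X.d i (i + 1)).hom ∘ₗ (u.f i).hom :=
    congrArg ModuleCat.Hom.hom (u.comm i (i + 1)).symm
  have hd' : (X.d i (i + 1)).hom ≠ 0 := fun h => hd (ModuleCat.hom_ext h)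
  constructor
  · intro ha
    refine (hfit (i + 1) _).resolve_left fun hb => hd' ?_
    exact Module.End.eq_zero_of_comp_eq_of_surjective_of_isNilpotent hcomm ha.2 hb
  · intro hb
    refine (hfit i _).resolve_left fun ha => hd' ?_
    exact Module.End.eq_zero_of_comp_eq_of_isNilpotent_of_injective hcomm ha hb.1

theorem bijective_f_iff_of_le
    (hfit : ∀ i (φ : Module.End A (X.X i)), IsNilpotent φ ∨ Function.Bijective φ) (u : X ⟶ X)
    {i j : ℤ} (hij : i ≤ j) (hd : ∀ l, i ≤ l → l < j → X.d l (l + 1) ≠ 0) :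
    Function.Bijective (u.f i).hom ↔ Function.Bijective (u.f j).hom := by
  induction j, hij using Int.leInduction with
  | base => rfl
  | succ j hij ih =>
    have hd_lt (l : ℤ) (hil : i ≤ l) (hlj : l < j) := hd l hil (by omega)
    exact (ih hd_lt).trans (bijective_f_iff_of_d_ne_zero hfit u (hd j hij (by omega)))

theorem d_ne_zero_of_le_of_lt
    (hgap : ∀ l, X.d l (l + 1) = 0 →
      (∀ j, l < j → IsZero (X.X j)) ∨ ∀ j, j ≤ l → IsZero (X.X j))
    {i j : ℤ} (hi : ¬IsZero (X.X i)) (hj : ¬IsZero (X.X j)) (l : ℤ) (hil : i ≤ l) (hlj : l < j) :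
    X.d l (l + 1) ≠ 0 := fun h =>
  (hgap l h).elim (fun hup => hj (hup j hlj)) (fun hdown => hi (hdown i hil))

theorem isIso_or_isIso_id_sub
    (hfit : ∀ i (φ : Module.End A (X.X i)), IsNilpotent φ ∨ Function.Bijective φ)
    (hgap : ∀ l, X.d l (l + 1) = 0 →
      (∀ j, l < j → IsZero (X.X j)) ∨ ∀ j, j ≤ l → IsZero (X.X j))
    (u : X ⟶ X) : IsIso u ∨ IsIso (𝟙 X - u) := by
  by_cases h : ∃ i, ¬IsZero (X.X i) ∧ Function.Bijective (u.f i).hom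
  · obtain ⟨i, hi, hbij⟩ := h
    refine Or.inl (isIso_of_bijective_f u fun j => ?_)
    by_cases hj : IsZero (X.X j)
    · exact (ConcreteCategory.isIso_iff_bijective _).mp (hj.isIso hj _)
    rcases le_total i j with hij | hji
    · exact (bijective_f_iff_of_le hfit u hij (d_ne_zero_of_le_of_lt hgap hi hj)).mp hbij
    · exact (bijective_f_iff_of_le hfit u hji (d_ne_zero_of_le_of_lt hgap hj hi)).mpr hbij
  · simp only [not_exists, not_and] at h
    refine Or.inr (isIso_of_bijective_f _ fun j => ?_)
    by_cases hj : IsZero (X.X j)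
    · exact (ConcreteCategory.isIso_iff_bijective _).mp (hj.isIso hj _)
    have hnil := (hfit j _).resolve_right (h j hj)
    rw [HomologicalComplex.sub_f_apply, HomologicalComplex.id_f, ModuleCat.hom_sub,
      ModuleCat.hom_id, ← Module.End.one_eq_id]
    exact (Module.End.isUnit_iff _).mp hnil.isUnit_one_sub

end CochainComplex

theorem stmt3_general {k A : Type} [Field k] [Ring A] [Algebra k A] [FiniteDimensional k A]
    (X : CochainComplex (ModuleCat A) ℤ)
    (hXmb : IsCompMinusB X)
    (hcomp : ∀ i : ℤ, IsZero (X.X i) ∨ IsIndecomposableModule A (X.X i))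
    (hd : ∀ l : ℤ, X.d l (l + 1) = 0 ↔
      ((∀ j : ℤ, l < j → IsZero (X.X j)) ∨ (∀ j : ℤ, j ≤ l → IsZero (X.X j)))) :
    ∀ (Y Z : CochainComplex (ModuleCat A) ℤ), IsCompMinusB Y → IsCompMinusB Z →
      Nonempty (HomotopyEquiv X (Y ⊞ Z)) →
      IsContractibleComplex Y ∨ IsContractibleComplex Z := by
  intro Y Z _ _ ⟨e⟩
  have : IsArtinianRing A := IsArtinianRing.of_finite k A
  have : IsNoetherianRing A := isNoetherian_of_tower k inferInstance
  have hfit : ∀ i (φ : Module.End A (X.X i)), IsNilpotent φ ∨ Function.Bijective φ := by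
    intro i φ
    rcases hcomp i with hzero | hindec
    · have := ModuleCat.subsingleton_of_isZero hzero
      exact Or.inl ⟨1, Subsingleton.elim _ _⟩
    · have := hXmb.1 i
      exact hindec.isNilpotent_or_bijective φ
  have hlocal := HomotopyCategory.isIso_or_isIso_id_sub
    (CochainComplex.isIso_or_isIso_id_sub hfit fun l => (hd l).mp)
  have := preservesBinaryBiproducts_of_preservesBiproducts
    (HomotopyCategory.quotient (ModuleCat A) (ComplexShape.up ℤ))
  have hsplit := HomotopyCategory.isoOfHomotopyEquiv e ≪≫
    (HomotopyCategory.quotient _ _).mapBiprod Y Z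
  simpa only [IsContractibleComplex, HomotopyCategory.isZero_quotient_obj_iff] using
    isZero_or_isZero_of_iso_biprod hlocal hsplit

/-- Let `X` be a non-contractible object of `Comp^{-,b}(𝒫)` whose components are all
zero or indecomposable, and whose differential `d^l` vanishes exactly when the complex
vanishes in all degrees `> l` or in all degrees `≤ l`. Then `X` is indecomposable in the
homotopy category: whenever `X` is homotopy equivalent to a direct sum `Y ⊞ Z` of objects of
`Comp^{-,b}(𝒫)`, then `Y` or `Z` is contractible. -/
theorem stmt3 {k A : Type} [Field k] [Ring A] [Algebra k A] [FiniteDimensional k A]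
    (X : CochainComplex (ModuleCat A) ℤ)
    (hXmb : IsCompMinusB X)
    (hXnc : ¬ IsContractibleComplex X)
    (hcomp : ∀ i : ℤ, IsZero (X.X i) ∨ IsIndecomposableModule A (X.X i))
    (hd : ∀ l : ℤ, X.d l (l + 1) = 0 ↔
      ((∀ j : ℤ, l < j → IsZero (X.X j)) ∨ (∀ j : ℤ, j ≤ l → IsZero (X.X j)))) :
    ∀ (Y Z : CochainComplex (ModuleCat A) ℤ), IsCompMinusB Y → IsCompMinusB Z →
      Nonempty (HomotopyEquiv X (Y ⊞ Z)) →
      IsContractibleComplex Y ∨ IsContractibleComplex Z :=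
  stmt3_general (k := k) X hXmb hcomp hd
end

section
/- Let P1 and P2 be indecomposable projective A-modules and let d: P1 → P2 be an A-linear map. Then d is p-irreducible if and only if there exist a projective A-module P′ and a surjective A-linear map q: P1 × P′ → rad P2 with ker q ⊆ rad(P1 × P′) (i.e., q is a projective cover of rad P2) such that d = ι ∘ q ∘ inl, where ι: rad P2 → P2 is the inclusion and inl: P1 → P1 × P′ is the canonical inclusion; in other words, d is p-irreducible if and only if P1 is a direct summand of the projective cover of rad P2 and d is induced by this cover. -/
/-- The radical of a module: the intersection of all its maximal (proper) submodules. -/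
def moduleRadical (A : Type*) [Ring A] (M : Type*) [AddCommGroup M] [Module A M] :
    Submodule A M :=
  sInf {m : Submodule A M | IsCoatom m}

/-- A linear map `d : M → N` between (finite-dimensional) projective modules is
`p`-irreducible if it is neither a section nor a retraction, and whenever `d = f₂ ∘ f₁`
with `f₁ : M → P`, `f₂ : P → N` for a (finite-dimensional) projective module `P`, then
`f₁` is a section or `f₂` is a retraction. -/
def IsPIrreducibleLM {A : Type} [Ring A] {M N : Type} [AddCommGroup M] [Module A M]
    [AddCommGroup N] [Module A N] (d : M →ₗ[A] N) : Prop :=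
  (¬ ∃ g : N →ₗ[A] M, g ∘ₗ d = LinearMap.id) ∧
  (¬ ∃ g : N →ₗ[A] M, d ∘ₗ g = LinearMap.id) ∧
  ∀ (P : Type) [AddCommGroup P] [Module A P], Module.Finite A P → Module.Projective A P →
    ∀ (f₁ : M →ₗ[A] P) (f₂ : P →ₗ[A] N), f₂ ∘ₗ f₁ = d →
      (∃ g : P →ₗ[A] M, g ∘ₗ f₁ = LinearMap.id) ∨ (∃ g : N →ₗ[A] P, f₂ ∘ₗ g = LinearMap.id)

/-!
Finitely generated modules over a finite-dimensional algebra have finite length, so by Fitting's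
lemma an indecomposable projective `P` has a unique maximal submodule: a map into `P` is either
surjective, hence split, or lands in `rad P`. Thus a `p`-irreducible `d` lifts to `f₁ : P₁ → Q`
through a projective cover `c : Q → rad P₂`, and `p`-irreducibility forces `f₁` to be a section,
i.e. `Q ≅ P₁ × P'`. Conversely, if `d = f₂ ∘ f₁` with `f₂` not surjective, lifting
`[f₂, q ∘ inr]` along the cover `q` gives an endomorphism `v` of `P₁ × P'` with `q ∘ v = q`;
as `ker q ⊆ rad`, Nakayama's lemma makes `v` invertible, and `v⁻¹` yields a retraction of `f₁`.
-/

open Function LinearMap Module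

theorem moduleRadical_eq_jacobson (A M : Type*) [Ring A] [AddCommGroup M] [Module A M] :
    moduleRadical A M = jacobson A M :=
  rfl

universe u

variable {A : Type u} [Ring A] {M N Q : Type*} [AddCommGroup M] [Module A M]
  [AddCommGroup N] [Module A N] [AddCommGroup Q] [Module A Q]

theorem LinearMap.exists_rightInverse_iff_surjective [Module.Projective A N] (f : M →ₗ[A] N) :
    (∃ g : N →ₗ[A] M, f ∘ₗ g = LinearMap.id) ↔ Surjective f :=
  ⟨fun ⟨g, hg⟩ y ↦ ⟨g y, LinearMap.congr_fun hg y⟩,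
    fun hf ↦ f.exists_rightInverse_of_surjective (range_eq_top.mpr hf)⟩

theorem Submodule.range_subtype_comp_le (N : Submodule A M) (g : Q →ₗ[A] N) :
    range (N.subtype ∘ₗ g) ≤ N :=
  (range_comp_le_range _ _).trans N.range_subtype.le

theorem Submodule.eq_top_of_sup_jacobson_eq_top [IsCoatomic (Submodule A M)]
    {N : Submodule A M} (h : N ⊔ jacobson A M = ⊤) : N = ⊤ := by
  refine (eq_top_or_exists_le_coatom N).resolve_right fun ⟨m, hm, hNm⟩ ↦ hm.ne_top ?_
  exact top_le_iff.mp (h ▸ sup_le hNm (sInf_le hm))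

theorem LinearMap.not_surjective_of_range_le_jacobson [Nontrivial N]
    [IsCoatomic (Submodule A N)] {f : M →ₗ[A] N} (h : range f ≤ jacobson A N) :
    ¬ Surjective f := fun hf ↦
  (jacobson_lt_top A N).ne (top_le_iff.mp (range_eq_top.mpr hf ▸ h))

theorem LinearMap.not_exists_leftInverse_of_range_le_jacobson [Nontrivial M]
    [IsCoatomic (Submodule A M)] {f : M →ₗ[A] N} (h : range f ≤ jacobson A N) :
    ¬ ∃ g : N →ₗ[A] M, g ∘ₗ f = LinearMap.id := by
  rintro ⟨g, hg⟩
  refine (jacobson_lt_top A M).ne (eq_top_iff.mpr fun x _ ↦ ?_)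
  have hx : g (f x) = x := LinearMap.congr_fun hg x
  exact hx ▸ le_comap_jacobson g (h (mem_range_self f x))

theorem LinearMap.bijective_of_sub_mem_jacobson [IsNoetherian A M] {v : Module.End A M}
    (h : ∀ x, x - v x ∈ jacobson A M) : Bijective v := by
  have hv : Surjective v := range_eq_top.mp <| Submodule.eq_top_of_sup_jacobson_eq_top <|
    eq_top_iff.mpr fun x _ ↦ Submodule.mem_sup.mpr ⟨v x, mem_range_self v x, _, h x, by abel⟩
  exact ⟨IsNoetherian.injective_of_surjective_endomorphism v hv, hv⟩

theorem LinearMap.bijective_of_comp_eq_self [IsNoetherian A M] {q : M →ₗ[A] N}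
    (hker : ker q ≤ jacobson A M) {v : Module.End A M} (h : q ∘ₗ v = q) : Bijective v :=
  bijective_of_sub_mem_jacobson fun x ↦ hker <| by
    have hx : q (v x) = q x := LinearMap.congr_fun h x
    simp [hx]

theorem IsIndecomposableModule.surjective_or_surjective_one_sub [IsNoetherian A M]
    [IsArtinian A M] (hM : IsIndecomposableModule A M) (g : Module.End A M) :
    Surjective g ∨ Surjective ⇑(1 - g) := by
  obtain ⟨n, hcompl, hn⟩ :=
    (g.eventually_isCompl_ker_pow_range_pow.and (Filter.eventually_ge_atTop 1)).exists
  rcases hM.2 _ _ hcompl with hker | hrange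
  · left
    have hinj : Injective (g ^ n) := ker_eq_bot.mp hker
    rw [← Nat.sub_add_cancel hn, pow_succ, Module.End.coe_mul] at hinj
    exact IsArtinian.surjective_of_injective_endomorphism g hinj.of_comp
  · right
    have : IsNilpotent g := ⟨n, range_eq_bot.mp hrange⟩
    exact ((Module.End.isUnit_iff _).mp this.isUnit_one_sub).2

theorem IsIndecomposableModule.eq_of_isCoatom [Module.Projective A M] [IsNoetherian A M]
    [IsArtinian A M] (hM : IsIndecomposableModule A M) {m₁ m₂ : Submodule A M}
    (h₁ : IsCoatom m₁) (h₂ : IsCoatom m₂) : m₁ = m₂ := by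
  by_contra hne
  have hsurj : Surjective (m₁.mkQ ∘ₗ m₂.subtype) := by
    rw [← range_eq_top, range_comp, Submodule.range_subtype, Submodule.map_mkQ_eq_top]
    exact h₁.sup_eq_top_of_ne h₂ hne
  obtain ⟨f, hf⟩ := projective_lifting_property _ m₁.mkQ hsurj
  set g : Module.End A M := m₂.subtype ∘ₗ f
  rcases hM.surjective_or_surjective_one_sub g with hg | hg
  · refine h₂.ne_top (eq_top_iff.mpr fun x _ ↦ ?_)
    obtain ⟨y, rfl⟩ := hg x
    exact (f y).2
  · refine h₁.ne_top (eq_top_iff.mpr fun x _ ↦ ?_)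
    obtain ⟨y, rfl⟩ := hg x
    have hy : m₁.mkQ (g y) = m₁.mkQ y := LinearMap.congr_fun hf y
    rw [← Submodule.Quotient.mk_eq_zero, ← Submodule.mkQ_apply]
    simp [-Submodule.mkQ_apply, hy]

theorem IsIndecomposableModule.le_jacobson_of_ne_top [Module.Projective A M] [IsNoetherian A M]
    [IsArtinian A M] (hM : IsIndecomposableModule A M) {N : Submodule A M} (hN : N ≠ ⊤) :
    N ≤ jacobson A M := by
  obtain ⟨m, hm, hNm⟩ := (eq_top_or_exists_le_coatom N).resolve_left hN
  exact le_sInf fun m' hm' ↦ hM.eq_of_isCoatom hm hm' ▸ hNm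

theorem IsIndecomposableModule.range_le_jacobson [Module.Projective A M] [IsNoetherian A M]
    [IsArtinian A M] (hM : IsIndecomposableModule A M) {f : N →ₗ[A] M} (hf : ¬ Surjective f) :
    range f ≤ jacobson A M :=
  hM.le_jacobson_of_ne_top (mt range_eq_top.mp hf)

theorem Submodule.projective_of_isCompl [Module.Projective A M] {N N' : Submodule A M}
    (h : IsCompl N N') : Module.Projective A N :=
  .of_split N.subtype (N.projectionOnto N' h) (Submodule.projectionOnto_comp_subtype h)

theorem LinearMap.comp_pow_eq_self {p : M →ₗ[A] N} {g : Module.End A M} (h : p ∘ₗ g = p)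
    (n : ℕ) : p ∘ₗ g ^ n = p := by
  induction n with
  | zero => rfl
  | succ n ih => rw [pow_succ, Module.End.mul_eq_comp, ← comp_assoc, ih, h]

/-- The summand is the Fitting-stable range of a lift of `p` along a maximal submodule not
containing `ker p`. -/
theorem exists_projective_submodule_ne_top_of_not_ker_le_jacobson [Module.Projective A Q]
    [IsNoetherian A Q] [IsArtinian A Q] {p : Q →ₗ[A] M} (hp : Surjective p)
    (hker : ¬ ker p ≤ jacobson A Q) :
    ∃ N : Submodule A Q, N ≠ ⊤ ∧ Module.Projective A N ∧ Surjective (p ∘ₗ N.subtype) := by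
  obtain ⟨m, hm, hkm⟩ : ∃ m, IsCoatom m ∧ ¬ ker p ≤ m := by
    simpa [jacobson, le_sInf_iff] using hker
  have hpm : Surjective (p ∘ₗ m.subtype) := by
    intro x
    obtain ⟨y, rfl⟩ := hp x
    have hy : y ∈ m ⊔ ker p := (hm.not_le_iff_codisjoint.mp hkm).eq_top ▸ Submodule.mem_top
    obtain ⟨a, ha, b, hb, rfl⟩ := Submodule.mem_sup.mp hy
    exact ⟨⟨a, ha⟩, by simp [mem_ker.mp hb]⟩
  obtain ⟨f, hf⟩ := projective_lifting_property _ p hpm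
  set g : Module.End A Q := m.subtype ∘ₗ f
  obtain ⟨n, hcompl, hn⟩ :=
    (g.eventually_isCompl_ker_pow_range_pow.and (Filter.eventually_ge_atTop 1)).exists
  refine ⟨range (g ^ n), fun htop ↦ hm.ne_top (eq_top_iff.mpr fun x _ ↦ ?_),
    Submodule.projective_of_isCompl hcompl.symm, fun x ↦ ?_⟩
  · obtain ⟨y, rfl⟩ := range_eq_top.mp htop x
    rw [← Nat.sub_add_cancel hn, pow_succ']
    exact (f _).2
  · obtain ⟨y, rfl⟩ := hp x
    exact ⟨⟨_, mem_range_self _ y⟩, LinearMap.congr_fun (comp_pow_eq_self hf n) y⟩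

/-- `Q` is a projective summand of a free module, minimal among those still mapping onto `M`. -/
theorem exists_projective_cover [IsArtinianRing A] (M : Type*) [AddCommGroup M] [Module A M]
    [Module.Finite A M] :
    ∃ (Q : Type u) (_ : AddCommGroup Q) (_ : Module A Q), Module.Finite A Q ∧
      Module.Projective A Q ∧ ∃ c : Q →ₗ[A] M, Surjective c ∧ ker c ≤ jacobson A Q := by
  obtain ⟨n, p, hp⟩ := Module.Finite.exists_fin' A M
  obtain ⟨N, ⟨hproj, hsurj⟩, hmin⟩ := wellFounded_lt.has_min
    {N : Submodule A (Fin n → A) | Module.Projective A N ∧ Surjective (p ∘ₗ N.subtype)}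
    ⟨⊤, .of_equiv Submodule.topEquiv.symm, fun x ↦ (hp x).elim fun y hy ↦ ⟨⟨y, trivial⟩, hy⟩⟩
  refine ⟨N, _, _, inferInstance, hproj, _, hsurj, not_not.mp fun hker ↦ ?_⟩
  obtain ⟨N', hN', hproj', hsurj'⟩ :=
    exists_projective_submodule_ne_top_of_not_ker_le_jacobson hsurj hker
  refine hmin (N'.map N.subtype) ⟨.of_equiv (N'.equivMapOfInjective _ N.injective_subtype),
    fun x ↦ ?_⟩ ?_
  · obtain ⟨y, hy⟩ := hsurj' x
    exact ⟨⟨y, Submodule.mem_map_of_mem y.2⟩, hy⟩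
  · simpa using Submodule.map_strictMono_of_injective N.injective_subtype hN'.lt_top

theorem exists_prod_cover_of_leftInverse {Q : Type u} [AddCommGroup Q] [Module A Q]
    [Module.Finite A Q] [Module.Projective A Q] {c : Q →ₗ[A] N} (hc : Surjective c)
    (hker : ker c ≤ jacobson A Q) {f : M →ₗ[A] Q} {r : Q →ₗ[A] M} (hr : r ∘ₗ f = LinearMap.id) :
    ∃ (P' : Type u) (_ : AddCommGroup P') (_ : Module A P'), Module.Finite A P' ∧
      Module.Projective A P' ∧ ∃ q : (M × P') →ₗ[A] N, Surjective q ∧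
        ker q ≤ jacobson A (M × P') ∧ q ∘ₗ inl A M P' = c ∘ₗ f := by
  obtain ⟨e, hf, -⟩ :=
    (exact_map_mkQ_range f).splitInjectiveEquiv (range f).mkQ_surjective ⟨r, hr⟩
  have : Module.Projective A (M × (Q ⧸ range f)) := .of_equiv e
  refine ⟨Q ⧸ range f, inferInstance, inferInstance, inferInstance,
    .of_split (inr A M _) (snd A M _) (snd_comp_inr A M _), c ∘ₗ e.symm,
    hc.comp e.symm.surjective, ?_, by rw [LinearMap.comp_assoc, ← hf]⟩
  rw [ker_comp, ← comap_jacobson_of_bijective e.symm.bijective]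
  exact Submodule.comap_mono hker

theorem exists_leftInverse_of_comp_eq_comp_inl {M' P : Type*} [AddCommGroup M'] [Module A M']
    [AddCommGroup P] [Module A P] [Module.Projective A P] [Module.Projective A M']
    [IsNoetherian A (M × M')] {q : (M × M') →ₗ[A] N} (hq : Surjective q)
    (hker : ker q ≤ jacobson A (M × M')) {f₁ : M →ₗ[A] P} {f₂ : P →ₗ[A] N}
    (h : f₂ ∘ₗ f₁ = q ∘ₗ inl A M M') : ∃ r : P →ₗ[A] M, r ∘ₗ f₁ = LinearMap.id := by
  obtain ⟨u, hu⟩ := projective_lifting_property q (f₂.coprod (q ∘ₗ inr A M M')) hq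
  have hv : q ∘ₗ (u ∘ₗ f₁.prodMap id) = q := by
    rw [← LinearMap.comp_assoc, hu]
    ext x
    · simpa [Prod.mk_zero_zero] using LinearMap.congr_fun h x
    · simp
  let v := LinearEquiv.ofBijective _ (bijective_of_comp_eq_self hker hv)
  refine ⟨fst A M M' ∘ₗ v.symm.toLinearMap ∘ₗ u ∘ₗ inl A P M', LinearMap.ext fun x ↦ ?_⟩
  have hx : u (f₁ x, 0) = v (x, 0) := rfl
  simp [hx]

/-- A map `d : P₁ → P₂` between indecomposable (finite-dimensional) projective `A`-modules
is `p`-irreducible if and only if `P₁` is a direct summand of the projective cover of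
`rad P₂` and `d` is induced by this cover. -/
theorem stmt7 {k A : Type} [Field k] [Ring A] [Algebra k A] [FiniteDimensional k A]
    (P₁ P₂ : Type) [AddCommGroup P₁] [Module A P₁] [AddCommGroup P₂] [Module A P₂]
    [Module.Finite A P₁] [Module.Finite A P₂]
    (h₁proj : Module.Projective A P₁) (h₂proj : Module.Projective A P₂)
    (h₁indec : IsIndecomposableModule A P₁) (h₂indec : IsIndecomposableModule A P₂)
    (d : P₁ →ₗ[A] P₂) :
    IsPIrreducibleLM d ↔
      ∃ (P' : Type) (_ : AddCommGroup P') (_ : Module A P'),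
        Module.Finite A P' ∧ Module.Projective A P' ∧
        ∃ q : (P₁ × P') →ₗ[A] moduleRadical A P₂,
          Function.Surjective q ∧
          LinearMap.ker q ≤ moduleRadical A (P₁ × P') ∧
          d = (moduleRadical A P₂).subtype ∘ₗ q ∘ₗ LinearMap.inl A P₁ P' := by
  have : IsArtinianRing A := .of_finite k A
  have : Nontrivial P₁ := h₁indec.1
  have : Nontrivial P₂ := h₂indec.1
  rw [moduleRadical_eq_jacobson A P₂]
  constructor
  · rintro ⟨-, hret, hfac⟩
    have hd := h₂indec.range_le_jacobson (mt d.exists_rightInverse_iff_surjective.mpr hret)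
    obtain ⟨Q, _, _, _, _, c, hc, hker⟩ := exists_projective_cover (A := A) (jacobson A P₂)
    obtain ⟨f₁, hf₁⟩ := projective_lifting_property c (d.codRestrict _ fun x ↦ hd ⟨x, rfl⟩) hc
    have hd_eq : (jacobson A P₂).subtype ∘ₗ c ∘ₗ f₁ = d := by rw [hf₁]; rfl
    obtain ⟨r, hr⟩ := (hfac Q ‹_› ‹_› f₁ _ hd_eq).resolve_right fun h ↦
      not_surjective_of_range_le_jacobson (Submodule.range_subtype_comp_le _ c)
        ((exists_rightInverse_iff_surjective _).mp h)
    obtain ⟨P', _, _, hfin, hproj, q, hq, hqker, hqinl⟩ :=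
      exists_prod_cover_of_leftInverse hc hker hr
    exact ⟨P', _, _, hfin, hproj, q, hq, hqker, by rw [hqinl, hd_eq]⟩
  · rintro ⟨P', _, _, _, _, q, hq, hqker, rfl⟩
    have hrange := Submodule.range_subtype_comp_le (jacobson A P₂) (q ∘ₗ inl A P₁ P')
    refine ⟨not_exists_leftInverse_of_range_le_jacobson hrange,
      mt (exists_rightInverse_iff_surjective _).mp (not_surjective_of_range_le_jacobson hrange),
      fun P _ _ _ _ f₁ f₂ hf ↦ ?_⟩
    by_cases hf₂ : Surjective f₂
    · exact .inr ((exists_rightInverse_iff_surjective f₂).mpr hf₂)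
    have hf₂ := h₂indec.range_le_jacobson hf₂
    exact .inl <| exists_leftInverse_of_comp_eq_comp_inl hq hqker
      (f₂ := f₂.codRestrict _ fun x ↦ hf₂ ⟨x, rfl⟩) (LinearMap.ext fun x ↦ Subtype.ext congr($hf x))
end
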